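/- There exists a complete lattice of infinite breadth whose interval topology is Hausdorff; namely, the lattice 2^ω of all functions ω → 2 with the pointwise order has infinite breadth and its interval topology is Hausdorff. -/

import Mathlib

/-!
For `n + 1` coordinates `i`, the coatoms `update ⊤ i ⊥` of `ι → α` have a meet that no `n` of
them attain: omitting the coatom at `i` leaves coordinate `i` of the meet at `⊤`.

Each coordinate evaluation is continuous from the interval topology of `ι → α` to that of `α`,
which for a linear order is the order topology. So the interval topology of `ι → α` is finer
than a product of Hausdorff topologies.
-/

open Set Topology

/-- The interval topology on a preorder: the topology whose closed sets are generated by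
the subbasis of all principal down-sets `↓x = Iic x` and all principal up-sets `↑x = Ici x`,
i.e. the topology generated by the complements of these sets. -/
def intervalTopology (α : Type*) [Preorder α] : TopologicalSpace α :=
  TopologicalSpace.generateFrom {s | ∃ a : α, s = (Set.Ici a)ᶜ ∨ s = (Set.Iic a)ᶜ}

/-- A complete lattice `L` has breadth `≤ n` if for every finite subset `F` of `L` there is
a subset `A ⊆ F` with at most `n` elements such that `inf A = inf F`. -/
def HasBreadthLE (L : Type*) [CompleteLattice L] (n : ℕ) : Prop :=
  ∀ F : Set L, F.Finite → ∃ A ⊆ F, A.ncard ≤ n ∧ sInf A = sInf F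

open Function

theorem not_hasBreadthLE_pi {ι α : Type*} [Infinite ι] [CompleteLattice α] [Nontrivial α]
    (n : ℕ) : ¬ HasBreadthLE (ι → α) n := by
  classical
  intro h
  set e : ι → ι → α := fun i => update ⊤ i ⊥
  have he : Injective e := fun i j hij => by
    by_contra hne
    simpa [e, hne] using congrFun hij i
  obtain ⟨s, hs⟩ := Infinite.exists_subset_card_eq ι (n + 1)
  have hF : (e '' s).Finite := s.finite_toSet.image e
  obtain ⟨A, hAF, hA, hinf⟩ := h (e '' s) hF
  have hcard : A.ncard < (e '' s).ncard := by
    rw [ncard_image_of_injective _ he, ncard_coe_finset, hs]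
    omega
  obtain ⟨_, ⟨i, his, rfl⟩, hiA⟩ := exists_mem_notMem_of_ncard_lt_ncard hcard (hF.subset hAF)
  have htop : sInf A i = ⊤ := by
    rw [sInf_apply, iInf_eq_top]
    rintro ⟨_, hf⟩
    obtain ⟨j, -, rfl⟩ := hAF hf
    have hij : i ≠ j := by
      rintro rfl
      exact hiA hf
    simp [e, hij]
  have hbot : sInf (e '' s) i = ⊥ := by
    simpa [e] using sInf_le (mem_image_of_mem e his) i
  exact bot_ne_top (hbot.symm.trans (hinf ▸ htop))

theorem intervalTopology_eq_preorderTopology (α : Type*) [LinearOrder α] :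
    intervalTopology α = Preorder.topology α := by
  simp only [intervalTopology, Preorder.topology, compl_Ici, compl_Iic, or_comm]

theorem t2Space_intervalTopology (α : Type*) [LinearOrder α] :
    @T2Space α (intervalTopology α) := by
  let _ := Preorder.topology α
  have : OrderTopology α := ⟨rfl⟩
  rw [intervalTopology_eq_preorderTopology]
  infer_instance

/-- `¬ a ≤ f i` means `¬ update ⊥ i a ≤ f`, and `¬ f i ≤ a` means `¬ f ≤ update ⊤ i a`. -/
theorem continuous_apply_intervalTopology {ι α : Type*} [Preorder α] [BoundedOrder α] (i : ι) :
    @Continuous (ι → α) α (intervalTopology (ι → α)) (intervalTopology α) (fun f => f i) := by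
  classical
  unfold intervalTopology
  rw [continuous_generateFrom_iff]
  rintro _ ⟨a, rfl | rfl⟩
  · apply TopologicalSpace.isOpen_generateFrom_of_mem
    refine ⟨update ⊥ i a, Or.inl ?_⟩
    ext f
    simp [update_le_iff]
  · apply TopologicalSpace.isOpen_generateFrom_of_mem
    refine ⟨update ⊤ i a, Or.inr ?_⟩
    ext f
    simp [le_update_iff]

theorem t2Space_intervalTopology_pi {ι α : Type*} [LinearOrder α] [BoundedOrder α] :
    @T2Space (ι → α) (intervalTopology (ι → α)) := by
  let _ : TopologicalSpace α := intervalTopology α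
  have := t2Space_intervalTopology α
  exact @T2Space.of_injective_continuous _ _ (intervalTopology (ι → α)) Pi.topologicalSpace _ id
    injective_id (@continuous_pi _ _ _ (intervalTopology (ι → α)) _ _ fun i =>
      continuous_apply_intervalTopology i)

/-- There is a complete lattice of infinite breadth whose interval topology is Hausdorff:
namely `2^ω`, the complete lattice of functions `ω → 2` with the pointwise order (where
`2 = {0 < 1}` is modelled by `Bool` with `false < true`), has infinite breadth and a Hausdorff
interval topology. -/
theorem exists_complete_lattice_infinite_breadth_t2 :
    ((∀ n : ℕ, 0 < n → ¬ HasBreadthLE (ℕ → Bool) n) ∧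
      @T2Space (ℕ → Bool) (intervalTopology (ℕ → Bool))) ∧
    ∃ (L : Type) (_ : CompleteLattice L),
      (∀ n : ℕ, 0 < n → ¬ HasBreadthLE L n) ∧ @T2Space L (intervalTopology L) := by
  have h : (∀ n : ℕ, 0 < n → ¬ HasBreadthLE (ℕ → Bool) n) ∧
      @T2Space (ℕ → Bool) (intervalTopology (ℕ → Bool)) :=
    ⟨fun n _ => not_hasBreadthLE_pi n, t2Space_intervalTopology_pi⟩
  exact ⟨h, ℕ → Bool, inferInstance, h⟩
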